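/- arXiv:2511.07570 — 5 statements merged into one kernel-verified Lean document; each statement's English description precedes it below -/
import Mathlib

section
/- Let r ≥ 3 and let M be a matroid on ground set {t, x_1, y_1, ..., x_r, y_r} such that for each i ∈ {1,...,r}, the set {t, x_i, y_i} is a circuit of size 3 (a triangle), and for each i, the set {x_i, y_i, t*} is a cocircuit of size 3 (a triad) for some fixed element t* distinct from t. Then for all distinct i, j ∈ {1,...,r}, the set {x_i, y_i, x_j, y_j} is a circuit of M. -/
/-!
Eliminating `t` from the triangles `{t, x i, y i}` and `{t, x j, y j}` yields a circuit `C`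
inside `{x i, y i, x j, y j}`. A circuit never meets a cocircuit in a single element, so the
triads `{x k, y k, t*}` force `C` to contain both or neither of `x k, y k`; and `C` cannot lie
inside one leg `{x k, y k}`, as it would then be a proper subset of the triangle on that leg.
Hence `C` is all of `{x i, y i, x j, y j}`.
-/

open Matroid Set

namespace SpikePaper

variable {α : Type*}

/-- `C` is a circuit of the matroid `M`: a minimal dependent set. -/
def Circ (M : Matroid α) (C : Set α) : Prop :=
  M.Dep C ∧ ∀ ⦃D⦄, M.Dep D → D ⊆ C → D = C

/-- A cocircuit of `M` is a circuit of the dual matroid. -/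
def Cocirc (M : Matroid α) (C : Set α) : Prop := Circ M✶ C

/-- A triangle is a 3-element circuit. -/
def Triangle (M : Matroid α) (T : Set α) : Prop := Circ M T ∧ T.encard = 3

/-- A triad is a 3-element cocircuit. -/
def Triad (M : Matroid α) (T : Set α) : Prop := Cocirc M T ∧ T.encard = 3

/-- The rank of the set `X` in `M` equals `n`. -/
def RkEq (M : Matroid α) (X : Set α) (n : ℕ) : Prop :=
  ∃ I, M.IsBasis I X ∧ I.ncard = n

/-- The rank of `M` equals `n`. -/
def RankEq (M : Matroid α) (n : ℕ) : Prop := RkEq M M.E n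

/-- Deletion of the set `D` from `M`. -/
def del (M : Matroid α) (D : Set α) : Matroid α := M ↾ (M.E \ D)

/-- Contraction of the set `C` in `M`. -/
def con (M : Matroid α) (C : Set α) : Matroid α := (del M✶ C)✶

/-- The rank of `X` in `M`, as an extended natural number. -/
noncomputable def er (M : Matroid α) (X : Set α) : ℕ∞ :=
  ⨆ I ∈ {I | M.Indep I ∧ I ⊆ X}, I.encard

/-- `M` is 3-connected: it has no `k`-separation for `k ∈ {1, 2}`. -/
def ThreeConnected (M : Matroid α) : Prop :=
  ∀ k : ℕ, 1 ≤ k → k ≤ 2 → ∀ X Y : Set α, X ∪ Y = M.E → Disjoint X Y →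
    er M X + er M Y + 1 ≤ er M M.E + (k : ℕ∞) →
    X.encard < (k : ℕ∞) ∨ Y.encard < (k : ℕ∞)

/-- `M` is simple: every subset of the ground set with at most two elements is independent. -/
def Simple (M : Matroid α) : Prop := ∀ X ⊆ M.E, X.encard ≤ 2 → M.Indep X

/-- The labels `t, x 0, y 0, ..., x (r-1), y (r-1)` are pairwise distinct. -/
def SpikeLabels {r : ℕ} (t : α) (x y : Fin r → α) : Prop :=
  Function.Injective x ∧ Function.Injective y ∧
  (∀ i j, x i ≠ y j) ∧ (∀ i, t ≠ x i) ∧ (∀ i, t ≠ y i)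

/-- `M` is a rank-`r` tipped spike with tip `t` and legs `{x i, y i}`. -/
def IsTippedSpike (M : Matroid α) (r : ℕ) (t : α) (x y : Fin r → α) : Prop :=
  3 ≤ r ∧ SpikeLabels t x y ∧
  M.E = insert t (⋃ i, {x i, y i}) ∧
  RankEq M r ∧
  (∀ i, Circ M {t, x i, y i}) ∧
  ∀ J : Set (Fin r), J.Nonempty → J ≠ Set.univ →
    RkEq M (⋃ i ∈ J, {x i, y i}) (J.ncard + 1)

/-- `X` is a `U_{2,n}`-restriction (an `n`-point line) of `M`. -/
def LineRestriction (M : Matroid α) (X : Set α) (n : ℕ) : Prop :=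
  X ⊆ M.E ∧ X.ncard = n ∧ RkEq M X 2 ∧
  ∀ p ⊆ X, p.encard = 2 → M.Indep p

/-- `X` is a `U_{3,5}`-restriction of `M`. -/
def U35Restriction (M : Matroid α) (X : Set α) : Prop :=
  X ⊆ M.E ∧ X.ncard = 5 ∧ RkEq M X 3 ∧
  ∀ S ⊆ X, S.encard ≤ 3 → M.Indep S

/-- `{u, v}` is contained in three distinct 4-element circuits of `M`. -/
def ThreeFourCircs (M : Matroid α) (u v : α) : Prop :=
  ∃ C1 C2 C3 : Set α, Circ M C1 ∧ Circ M C2 ∧ Circ M C3 ∧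
    C1.encard = 4 ∧ C2.encard = 4 ∧ C3.encard = 4 ∧
    C1 ≠ C2 ∧ C1 ≠ C3 ∧ C2 ≠ C3 ∧
    {u, v} ⊆ C1 ∧ {u, v} ⊆ C2 ∧ {u, v} ⊆ C3

end SpikePaper

namespace Matroid

variable {α : Type*} {M : Matroid α} {C X : Set α} {a b c d s t : α}

lemma IsCircuit.mem_of_mem_of_isCocircuit (hC : M.IsCircuit C) (hK : M.IsCocircuit {a, b, s})
    (hs : s ∉ C) (ha : a ∈ C) : b ∈ C := by
  by_contra hb
  refine hC.inter_isCocircuit_ne_singleton hK (e := a) (ext fun e ↦ ?_)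
  simp only [mem_inter_iff, mem_insert_iff, mem_singleton_iff]
  grind

lemma IsCircuit.mem_iff_mem_of_isCocircuit (hC : M.IsCircuit C) (hK : M.IsCocircuit {a, b, s})
    (hs : s ∉ C) : a ∈ C ↔ b ∈ C :=
  ⟨hC.mem_of_mem_of_isCocircuit hK hs,
    hC.mem_of_mem_of_isCocircuit (by rwa [insert_comm]) hs⟩

lemma IsCircuit.not_subset_of_isCircuit_insert (hC : M.IsCircuit C)
    (hT : M.IsCircuit (insert t X)) (htC : t ∉ C) : ¬ C ⊆ X := fun hCX ↦
  htC <| (hC.eq_of_subset_isCircuit hT (hCX.trans (subset_insert t X))) ▸ mem_insert t X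

lemma isCircuit_of_triangles_of_triads
    (hT₁ : M.IsCircuit {t, a, b}) (hT₂ : M.IsCircuit {t, c, d})
    (hK₁ : M.IsCocircuit {a, b, s}) (hK₂ : M.IsCocircuit {c, d, s})
    (ha : a ∉ ({t, c, d} : Set α)) (hs : s ∉ ({a, b, c, d} : Set α)) :
    M.IsCircuit {a, b, c, d} := by
  have hne : ({t, a, b} : Set α) ≠ {t, c, d} := fun h ↦ ha (h ▸ by simp)
  obtain ⟨C, hCsub, hC⟩ := hT₁.elimination hT₂ hne t
  have htC : t ∉ C := fun htC ↦ (hCsub htC).2 rfl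
  have hCabcd : C ⊆ {a, b, c, d} := hCsub.trans (by grind)
  have hsC : s ∉ C := fun hsC ↦ hs (hCabcd hsC)
  have hab := hC.mem_iff_mem_of_isCocircuit hK₁ hsC
  have hcd := hC.mem_iff_mem_of_isCocircuit hK₂ hsC
  have not_sub_ab := hC.not_subset_of_isCircuit_insert hT₁ htC
  have not_sub_cd := hC.not_subset_of_isCircuit_insert hT₂ htC
  suffices a ∈ C ∧ c ∈ C by
    rwa [hCabcd.antisymm (by grind)] at hC
  constructor
  · by_contra haC
    exact not_sub_cd fun e he ↦ by grind
  · by_contra hcC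
    exact not_sub_ab fun e he ↦ by grind

end Matroid

namespace SpikePaper

variable {α : Type*}

lemma circ_iff_isCircuit {M : Matroid α} {C : Set α} : Circ M C ↔ M.IsCircuit C :=
  isCircuit_iff.symm

lemma cocirc_iff_isCocircuit {M : Matroid α} {K : Set α} : Cocirc M K ↔ M.IsCocircuit K :=
  circ_iff_isCircuit

theorem stmt0_general {α : Type*} (M : Matroid α) (r : ℕ)
    (t tstar : α) (x y : Fin r → α)
    (hlab : SpikeLabels t x y) (hlab' : SpikeLabels tstar x y)
    (htri : ∀ i, Triangle M {t, x i, y i})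
    (htriad : ∀ i, Triad M {x i, y i, tstar}) :
    ∀ i j : Fin r, i ≠ j → Circ M {x i, y i, x j, y j} := by
  obtain ⟨hxinj, -, hxy, htx, -⟩ := hlab
  obtain ⟨-, -, -, hsx, hsy⟩ := hlab'
  intro i j hij
  refine circ_iff_isCircuit.2 <| isCircuit_of_triangles_of_triads
    (circ_iff_isCircuit.1 (htri i).1) (circ_iff_isCircuit.1 (htri j).1)
    (cocirc_iff_isCocircuit.1 (htriad i).1) (cocirc_iff_isCocircuit.1 (htriad j).1) ?_ ?_
  · simp only [mem_insert_iff, mem_singleton_iff, not_or]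
    exact ⟨(htx i).symm, hxinj.ne hij, hxy i j⟩
  · simp only [mem_insert_iff, mem_singleton_iff, not_or]
    exact ⟨hsx i, hsy i, hsx j, hsy j⟩

/-- if `M` has ground set `{t, t*, x_1, y_1, ..., x_r, y_r}` (all distinct),
each `{t, x i, y i}` is a triangle and each `{x i, y i, t*}` is a triad, then for all
distinct `i, j` the set `{x i, y i, x j, y j}` is a circuit of `M`. -/
theorem stmt0 {α : Type*} (M : Matroid α) (r : ℕ) (hr : 3 ≤ r)
    (t tstar : α) (x y : Fin r → α)
    (hlab : SpikeLabels t x y) (hlab' : SpikeLabels tstar x y) (htt : t ≠ tstar)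
    (hE : M.E = insert t (insert tstar (⋃ i, {x i, y i})))
    (htri : ∀ i, Triangle M {t, x i, y i})
    (htriad : ∀ i, Triad M {x i, y i, tstar}) :
    ∀ i j : Fin r, i ≠ j → Circ M {x i, y i, x j, y j} :=
  stmt0_general M r t tstar x y hlab hlab' htri htriad

end SpikePaper
end

section
/- Let M be a matroid with two distinct triangles {t, x_i, y_i} and {t, x_j, y_j} sharing only the element t, and suppose {t*, x_i, y_i} and {t*, x_j, y_j} are triads of M for some element t* not in either triangle. Then circuit elimination applied to the two triangles, together with orthogonality with the two triads, implies that {x_i, y_i, x_j, y_j} is a circuit of M. -/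
/-!
Eliminating `t` from the two triangles gives a circuit `C ⊆ {x_i, y_i, x_j, y_j}`. As `t* ∉ C`,
orthogonality with the triad `{t*, x_i, y_i}` forces `C` to contain both or neither of `x_i, y_i`,
and likewise for `x_j, y_j`. Nor can `C` lie inside one pair: it would then be contained in, hence
equal to, the triangle through that pair, which contains `t`. So `C` is the whole set.
-/

open Matroid Set

namespace SpikePaper

variable {α : Type*}

lemma _root_.Matroid.IsCircuit.mem_iff_mem_of_isCocircuit_s1 {M : Matroid α} {C : Set α} {s x y : α}
    (hC : M.IsCircuit C) (hK : M.IsCocircuit {s, x, y}) (hsC : s ∉ C) : x ∈ C ↔ y ∈ C := by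
  have key {a b : α} (hK : M.IsCocircuit {s, a, b}) (haC : a ∈ C) : b ∈ C := by
    by_contra hbC
    refine hC.inter_isCocircuit_ne_singleton hK (e := a) ?_
    ext z
    simp only [mem_inter_iff, mem_insert_iff, mem_singleton_iff]
    constructor
    · rintro ⟨hzC, rfl | rfl | rfl⟩ <;> first | rfl | contradiction
    · rintro rfl
      exact ⟨haC, .inr (.inl rfl)⟩
  rw [pair_comm] at hK
  exact ⟨key (by rwa [pair_comm]), key hK⟩

lemma _root_.Matroid.IsCircuit.exists_isCircuit_subset_union_of_insert {M : Matroid α}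
    {P Q : Set α} {t : α} (hP : M.IsCircuit (insert t P)) (hQ : M.IsCircuit (insert t Q))
    (hPQ : insert t P ≠ insert t Q) : ∃ C ⊆ P ∪ Q, t ∉ C ∧ M.IsCircuit C := by
  obtain ⟨C, hCsub, hC⟩ := hP.elimination hQ hPQ t
  refine ⟨C, fun z hz ↦ ?_, fun htC ↦ (hCsub htC).2 rfl, hC⟩
  obtain ⟨hz, hzt⟩ := hCsub hz
  simp only [mem_union, mem_insert_iff, mem_singleton_iff] at hz hzt ⊢
  tauto

lemma _root_.Matroid.IsCircuit.inter_nonempty_of_subset_union {M : Matroid α} {C P Q : Set α}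
    {t : α} (hC : M.IsCircuit C) (hCPQ : C ⊆ P ∪ Q) (htC : t ∉ C)
    (hQ : M.IsCircuit (insert t Q)) : (C ∩ P).Nonempty := by
  by_contra hCP
  have hCQ : C ⊆ insert t Q := fun z hz ↦
    .inr ((hCPQ hz).resolve_left fun hzP ↦ hCP ⟨z, hz, hzP⟩)
  exact htC (hC.eq_of_subset_isCircuit hQ hCQ ▸ mem_insert t Q)

theorem stmt1_general {α : Type*} (M : Matroid α) (t tstar xi yi xj yj : α)
    (hdist : [t, tstar, xi, yi, xj, yj].Pairwise (· ≠ ·))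
    (h1 : Triangle M {t, xi, yi}) (h2 : Triangle M {t, xj, yj})
    (h3 : Triad M {tstar, xi, yi}) (h4 : Triad M {tstar, xj, yj}) :
    Circ M {xi, yi, xj, yj} := by
  simp only [List.pairwise_cons, List.mem_cons, List.not_mem_nil, or_false, forall_eq_or_imp,
    forall_eq, List.Pairwise.nil] at hdist
  obtain ⟨⟨-, htxi, -⟩, ⟨hsxi, hsyi, hsxj, hsyj⟩, ⟨-, hxixj, hxiyj⟩, -⟩ := hdist
  rw [Triangle, circ_iff_isCircuit] at h1 h2
  rw [Triad, Cocirc, circ_iff_isCircuit] at h3 h4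
  have hne : ({t, xi, yi} : Set α) ≠ {t, xj, yj} := fun h ↦ by
    have : xi ∈ ({t, xj, yj} : Set α) := h ▸ by simp
    simp_all
  obtain ⟨C, hCsub, htC, hC⟩ := h1.1.exists_isCircuit_subset_union_of_insert h2.1 hne
  have hsC : tstar ∉ C := fun h ↦ by
    rcases hCsub h with (h | h) | (h | h) <;> contradiction
  have hpair {x y : α} (hK : M.IsCocircuit {tstar, x, y}) (hxy : (C ∩ {x, y}).Nonempty) :
      {x, y} ⊆ C := by
    obtain ⟨z, hzC, rfl | rfl⟩ := hxy
    · exact pair_subset_iff.2 ⟨hzC, (hC.mem_iff_mem_of_isCocircuit_s1 hK hsC).1 hzC⟩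
    · exact pair_subset_iff.2 ⟨(hC.mem_iff_mem_of_isCocircuit_s1 hK hsC).2 hzC, hzC⟩
  have hi := hpair h3.1 (hC.inter_nonempty_of_subset_union hCsub htC h2.1)
  have hj := hpair h4.1 (hC.inter_nonempty_of_subset_union (union_comm _ _ ▸ hCsub) htC h1.1)
  have hCeq : C = {xi, yi, xj, yj} := by
    rw [hCsub.antisymm (union_subset hi hj), insert_union, singleton_union]
  exact circ_iff_isCircuit.2 (hCeq ▸ hC)

/-- two triangles through `t` and two triads through `t*` on the same pairs
force `{x_i, y_i, x_j, y_j}` to be a circuit. -/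
theorem stmt1 {α : Type*} (M : Matroid α) (t tstar xi yi xj yj : α)
    (hdist : [t, tstar, xi, yi, xj, yj].Pairwise (· ≠ ·))
    (hE : ({t, tstar, xi, yi, xj, yj} : Set α) ⊆ M.E)
    (h1 : Triangle M {t, xi, yi}) (h2 : Triangle M {t, xj, yj})
    (h3 : Triad M {tstar, xi, yi}) (h4 : Triad M {tstar, xj, yj}) :
    Circ M {xi, yi, xj, yj} :=
  stmt1_general M t tstar xi yi xj yj hdist h1 h2 h3 h4

end SpikePaper
end

section
/- Let M be a 3-connected matroid, let X ⊆ E(M) with the restriction M|X isomorphic to the uniform matroid U_{2,n} where n ≥ 4, and let x ∈ X. Then M \ x is 3-connected. -/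
open Matroid Set

namespace SpikePaper

variable {α : Type*}

/-!
If `X` is a line with at least four points and `x ∈ X`, then any partition `(A, B)` of
`E(M) \ {x}` puts two points of `X \ {x}` on the same side, and these two points span `x`.
Moving `x` to that side turns a `k`-separation of `M \ x` into one of `M` with the same ranks,
so `M \ x` inherits 3-connectivity from `M`.
-/

variable {M : Matroid α}

lemma er_eq_eRk (M : Matroid α) (X : Set α) : er M X = M.eRk X := by
  obtain ⟨I, hI⟩ := M.exists_isBasis' X
  refine le_antisymm (iSup₂_le fun J ⟨hJ, hJX⟩ => hJ.encard_le_eRk_of_subset hJX) ?_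
  exact hI.encard_eq_eRk ▸ le_iSup₂_of_le I ⟨hI.indep, hI.subset⟩ le_rfl

lemma threeConnected_iff : ThreeConnected M ↔
    ∀ k : ℕ, 1 ≤ k → k ≤ 2 → ∀ A B : Set α, A ∪ B = M.E → Disjoint A B →
      M.eRk A + M.eRk B + 1 ≤ M.eRank + k → A.encard < k ∨ B.encard < k := by
  simp only [ThreeConnected, er_eq_eRk, eRk_ground]

lemma eRk_insert_of_mem_closure {e : α} {X : Set α} (he : e ∈ M.closure X) :
    M.eRk (insert e X) = M.eRk X := by
  rw [← eRk_closure_eq, closure_insert_eq_of_mem_closure he, eRk_closure_eq]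

lemma ThreeConnected.del_singleton_of_forall_mem_closure (h3 : ThreeConnected M) {x : α}
    (hcl : ∀ A B, A ∪ B = M.E \ {x} → Disjoint A B →
      x ∈ M.closure A ∨ x ∈ M.closure B) :
    ThreeConnected (del M {x}) := by
  rw [threeConnected_iff] at h3 ⊢
  intro k hk1 hk2 A B (hAB : A ∪ B = M.E \ {x}) hdisj hsep
  wlog hxA : x ∈ M.closure A generalizing A B
  · have hxB := (hcl A B hAB hdisj).resolve_left hxA
    rw [add_comm (eRk _ A)] at hsep
    exact (this B A (union_comm A B ▸ hAB) hdisj.symm hsep hxB).symm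
  have hA : A ⊆ M.E \ {x} := hAB ▸ subset_union_left
  have hB : B ⊆ M.E \ {x} := hAB ▸ subset_union_right
  have hxE : x ∈ M.E := M.closure_subset_ground A hxA
  have hxE' : x ∈ M.closure (M.E \ {x}) := M.closure_subset_closure hA hxA
  rw [del, eRank_restrict, restrict_eRk_eq _ hA, restrict_eRk_eq _ hB,
    ← eRk_insert_of_mem_closure hxE', insert_sdiff_singleton, insert_eq_of_mem hxE,
    ← eRk_insert_of_mem_closure hxA, eRk_ground] at hsep
  have hunion : insert x A ∪ B = M.E := by
    rw [insert_union, hAB, insert_sdiff_singleton, insert_eq_of_mem hxE]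
  have hdisj' : Disjoint (insert x A) B :=
    disjoint_insert_left.2 ⟨fun hxB => (hB hxB).2 rfl, hdisj⟩
  refine (h3 k hk1 hk2 _ B hunion hdisj' hsep).imp_left ?_
  exact (encard_mono (subset_insert x A)).trans_lt

lemma exists_pair_subset_of_subset_union {S A B : Set α} (hS : 3 ≤ S.encard)
    (hSAB : S ⊆ A ∪ B) : ∃ T ⊆ S, T.encard = 2 ∧ (T ⊆ A ∨ T ⊆ B) := by
  have hcover : S.encard ≤ (S ∩ A).encard + (S ∩ B).encard := by
    refine (encard_le_encard ?_).trans (encard_union_le _ _)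
    rw [← inter_union_distrib_left]
    exact subset_inter subset_rfl hSAB
  have h2 : 2 ≤ (S ∩ A).encard ∨ 2 ≤ (S ∩ B).encard := by
    by_contra! h
    have hA : (S ∩ A).encard ≤ 1 :=
      Order.le_of_lt_add_one (by simpa [one_add_one_eq_two] using h.1)
    have hB : (S ∩ B).encard ≤ 1 :=
      Order.le_of_lt_add_one (by simpa [one_add_one_eq_two] using h.2)
    have hS2 := hS.trans (hcover.trans (add_le_add hA hB))
    norm_num at hS2
  rcases h2 with h2 | h2
  · obtain ⟨T, hT, hTcard⟩ := exists_subset_encard_eq h2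
    exact ⟨T, hT.trans inter_subset_left, hTcard, .inl (hT.trans inter_subset_right)⟩
  · obtain ⟨T, hT, hTcard⟩ := exists_subset_encard_eq h2
    exact ⟨T, hT.trans inter_subset_left, hTcard, .inr (hT.trans inter_subset_right)⟩

lemma LineRestriction.subset_closure_of_encard_eq_two {X T : Set α} {n : ℕ}
    (hline : LineRestriction M X n) (hTX : T ⊆ X) (hT : T.encard = 2) : X ⊆ M.closure T := by
  obtain ⟨hXE, -, ⟨I, hI, hIcard⟩, hpairs⟩ := hline
  have hTi := hpairs T hTX hT
  refine (hTi.isBasis_of_eRk_ge (finite_of_encard_eq_coe hT) hTX ?_ hXE).subset_closure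
  rw [hTi.eRk_eq_encard, hT, ← hI.encard_eq_eRk,
    ← (finite_of_ncard_pos (by omega)).cast_ncard_eq, hIcard]
  rfl

lemma LineRestriction.three_le_encard_sdiff_singleton {X : Set α} {n : ℕ} (hn : 4 ≤ n)
    (hline : LineRestriction M X n) {x : α} (hx : x ∈ X) : 3 ≤ (X \ {x}).encard := by
  obtain ⟨-, hXcard, -⟩ := hline
  have hXfin : X.Finite := finite_of_ncard_pos (by omega)
  have h4 : (3 : ℕ∞) + 1 ≤ (X \ {x}).encard + 1 := by
    rw [encard_sdiff_singleton_add_one hx, ← hXfin.cast_ncard_eq, hXcard]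
    exact_mod_cast hn
  exact (ENat.add_le_add_iff_right ENat.one_ne_top).1 h4

/-- deleting a point of a line with at least 4 points from a 3-connected
matroid keeps it 3-connected. -/
theorem stmt7 {α : Type*} (M : Matroid α) (h3 : ThreeConnected M)
    (X : Set α) (n : ℕ) (hn : 4 ≤ n) (hline : LineRestriction M X n)
    (x : α) (hx : x ∈ X) :
    ThreeConnected (del M {x}) := by
  refine h3.del_singleton_of_forall_mem_closure fun A B hAB _ => ?_
  have hspan {T : Set α} (hTS : T ⊆ X \ {x}) (hT : T.encard = 2) : x ∈ M.closure T :=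
    hline.subset_closure_of_encard_eq_two (hTS.trans sdiff_subset) hT hx
  obtain ⟨T, hTS, hT, hTA | hTB⟩ := exists_pair_subset_of_subset_union
    (hline.three_le_encard_sdiff_singleton hn hx) (hAB ▸ sdiff_subset_sdiff_left hline.1)
  · exact .inl (M.closure_subset_closure hTA (hspan hTS hT))
  · exact .inr (M.closure_subset_closure hTB (hspan hTS hT))

end SpikePaper
end

section
/- Let M be a matroid on 8 elements of rank 4 with no triangles and no U_{3,5}-restriction, and suppose the ground set E(M) admits a partition into four 2-element sets L_1, L_2, L_3, L_4 such that L_i ∪ L_j is a circuit of M for all distinct i, j. Then L_i ∪ L_j is also a cocircuit of M for all distinct i, j; that is, M is a rank-4 tipless spike. -/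
/-!
Fix two legs `L i, L j` and let `H` be the union of the other two, a 4-circuit of rank 3.
The legs rule out circuits of size at most two (each would sit properly inside a union of two
legs), and there are no triangles, so every set of at most three elements is independent. Hence a
point of `cl H \ H` would make `H` plus that point a `U_{3,5}`-restriction; so `H` is closed, of
rank `r(M) - 1`, i.e. a hyperplane, and its complement `L i ∪ L j` is a cocircuit.
-/

open Matroid Set

namespace SpikePaper

variable {α : Type*}

lemma RankEq.eRank_eq {M : Matroid α} {n : ℕ} (h : RankEq M n) (hn : n ≠ 0) :
    M.eRank = n := by
  obtain ⟨B, hB, hBn⟩ := h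
  rw [← (isBasis_ground_iff.1 hB).encard_eq_eRank,
    ← (finite_of_ncard_ne_zero (hBn ▸ hn)).cast_ncard_eq, hBn]

lemma _root_.Set.exists_subset_union_of_encard_le_two {ι : Type*} [Nontrivial ι] {L : ι → Set α}
    {S : Set α} (hS : S ⊆ ⋃ i, L i) (hS2 : S.encard ≤ 2) :
    ∃ i j, i ≠ j ∧ S ⊆ L i ∪ L j := by
  rcases le_or_gt S.encard 1 with hS1 | hS1
  · rcases encard_le_one_iff_eq.1 hS1 with rfl | ⟨a, rfl⟩
    · obtain ⟨i, j, hij⟩ := exists_pair_ne ι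
      exact ⟨i, j, hij, empty_subset _⟩
    obtain ⟨i, hai⟩ := mem_iUnion.1 (hS rfl)
    obtain ⟨j, hji⟩ := exists_ne i
    exact ⟨i, j, hji.symm, singleton_subset_iff.2 (Or.inl hai)⟩
  obtain ⟨a, b, -, rfl⟩ := encard_eq_two.1 (hS2.antisymm (Order.add_one_le_of_lt hS1))
  obtain ⟨i, hai⟩ := mem_iUnion.1 (hS (mem_insert a {b}))
  obtain ⟨j, hbj⟩ := mem_iUnion.1 (hS (mem_insert_of_mem a rfl))
  by_cases hij : i = j
  · subst hij
    obtain ⟨k, hki⟩ := exists_ne i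
    exact ⟨i, k, hki.symm, pair_subset (Or.inl hai) (Or.inl hbj)⟩
  exact ⟨i, j, hij, pair_subset (Or.inl hai) (Or.inr hbj)⟩

lemma _root_.Set.exists_iUnion_sdiff_eq_union_of_fin_four {L : Fin 4 → Set α}
    (hdisj : ∀ i j, i ≠ j → Disjoint (L i) (L j)) {i j : Fin 4} (hij : i ≠ j) :
    ∃ k l, k ≠ l ∧ (⋃ m, L m) \ (L i ∪ L j) = L k ∪ L l := by
  obtain ⟨k, l, hkl, hik, hil, hjk, hjl, hcov⟩ : ∃ k l : Fin 4,
      k ≠ l ∧ i ≠ k ∧ i ≠ l ∧ j ≠ k ∧ j ≠ l ∧ ∀ m : Fin 4, m = i ∨ m = j ∨ m = k ∨ m = l := by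
    revert i j; decide
  refine ⟨k, l, hkl, subset_antisymm ?_ ?_⟩
  · rintro x ⟨hx, hxij⟩
    obtain ⟨m, hm⟩ := mem_iUnion.1 hx
    rcases hcov m with rfl | rfl | rfl | rfl
    exacts [(hxij (Or.inl hm)).elim, (hxij (Or.inr hm)).elim, Or.inl hm, Or.inr hm]
  · rintro x (hx | hx) <;> refine ⟨mem_iUnion_of_mem _ hx, ?_⟩ <;> rintro (hx' | hx')
    exacts [(hdisj i k hik).notMem_of_mem_left hx' hx, (hdisj j k hjk).notMem_of_mem_left hx' hx,
      (hdisj i l hil).notMem_of_mem_left hx' hx, (hdisj j l hjl).notMem_of_mem_left hx' hx]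

section

variable {M : Matroid α} {C : Set α}

lemma _root_.Matroid.IsCircuit.two_lt_encard {ι : Type*} [Nontrivial ι] {L : ι → Set α}
    (hL : ∀ i, (L i).encard = 2) (hdisj : ∀ i j, i ≠ j → Disjoint (L i) (L j))
    (hcup : ⋃ i, L i = M.E) (hcirc : ∀ i j, i ≠ j → M.IsCircuit (L i ∪ L j))
    (hC : M.IsCircuit C) : 2 < C.encard := by
  by_contra! hC2
  obtain ⟨i, j, hij, hCij⟩ :=
    exists_subset_union_of_encard_le_two (hcup ▸ hC.subset_ground) hC2
  rw [hC.eq_of_subset_isCircuit (hcirc i j hij) hCij, encard_union_eq (hdisj i j hij),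
    hL, hL] at hC2
  norm_num at hC2

lemma _root_.Matroid.indep_of_encard_le_three (hC : ∀ C, M.IsCircuit C → 2 < C.encard)
    (htri : ∀ T, ¬ Triangle M T) {S : Set α} (hSE : S ⊆ M.E) (hS3 : S.encard ≤ 3) :
    M.Indep S := by
  by_contra hS
  obtain ⟨C, hCS, hCcirc⟩ := (M.not_indep_iff hSE).1 hS |>.exists_isCircuit_subset
  have hC3 : C.encard = 3 :=
    ((encard_le_encard hCS).trans hS3).antisymm (Order.add_one_le_of_lt (hC C hCcirc))
  exact htri C ⟨circ_iff_isCircuit.2 hCcirc, hC3⟩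

/-- A point of `cl C \ C` would turn the 4-circuit `C` into a `U_{3,5}`-restriction. -/
lemma _root_.Matroid.IsCircuit.closure_eq_self (hC : M.IsCircuit C)
    (hC4 : C.encard = 4) (h3 : ∀ S ⊆ M.E, S.encard ≤ 3 → M.Indep S)
    (hu35 : ∀ X, ¬ U35Restriction M X) : M.closure C = C := by
  refine (M.subset_closure C hC.subset_ground).antisymm' fun f hf ↦ by_contra fun hfC ↦ ?_
  obtain ⟨a, ha⟩ := hC.nonempty
  have hXE : insert f C ⊆ M.E := insert_subset (M.closure_subset_ground C hf) hC.subset_ground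
  have hJ : M.IsBasis (C \ {a}) (insert f C) := by
    refine (hC.sdiff_singleton_isBasis ha).indep.isBasis_of_subset_of_subset_closure
      (sdiff_subset.trans (subset_insert f C)) ?_
    rw [hC.closure_sdiff_singleton_eq]
    exact insert_subset hf (M.subset_closure C hC.subset_ground)
  refine hu35 (insert f C) ⟨hXE, ?_, ⟨C \ {a}, hJ, ?_⟩, fun S hS hS3 ↦ h3 S (hS.trans hXE) hS3⟩
  · rw [ncard_def, encard_insert_of_notMem hfC, hC4]; rfl
  · rw [ncard_def, encard_sdiff_singleton_of_mem ha, hC4]; rfl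

/-- A closed circuit of rank `r(M) - 1` is a hyperplane, so its complement is a cocircuit. -/
lemma _root_.Matroid.IsCircuit.compl_isCocircuit (hC : M.IsCircuit C)
    (hfin : C.Finite) (hcl : M.closure C = C) (hrk : M.eRank = C.encard) :
    M.IsCocircuit (M.E \ C) := by
  obtain ⟨a, ha⟩ := hC.nonempty
  set J := C \ {a}
  obtain ⟨B, hB, hJB⟩ := (hC.sdiff_singleton_isBasis ha).indep.exists_isBase_superset
  have hBJ : (B \ J).encard = 1 := by
    have h := encard_sdiff_add_encard_of_subset hJB
    rw [hB.encard_eq_eRank, hrk, ← encard_sdiff_singleton_add_one ha, add_comm _ 1] at h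
    exact ENat.add_left_injective_of_ne_top (hfin.subset sdiff_subset).encard_lt_top.ne h
  obtain ⟨f, hf⟩ := encard_eq_one.1 hBJ
  have hcoc := hB.compl_closure_sdiff_singleton_isCocircuit (hf.symm.subset rfl).1
  rwa [← hf, sdiff_sdiff_cancel_left hJB, hC.closure_sdiff_singleton_eq, hcl] at hcoc

end

theorem stmt10_general {α : Type*} (M : Matroid α) (hrk : RankEq M 4)
    (htri : ∀ T, ¬ Triangle M T) (hu35 : ∀ X, ¬ U35Restriction M X)
    (L : Fin 4 → Set α) (hL2 : ∀ i, (L i).ncard = 2)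
    (hdisj : ∀ i j : Fin 4, i ≠ j → Disjoint (L i) (L j))
    (hcup : (⋃ i, L i) = M.E)
    (hcirc : ∀ i j : Fin 4, i ≠ j → Circ M (L i ∪ L j)) :
    ∀ i j : Fin 4, i ≠ j → Cocirc M (L i ∪ L j) := by
  intro i j hij
  have hL : ∀ i, (L i).encard = 2 := fun i ↦ by
    rw [← (finite_of_ncard_ne_zero (by rw [hL2 i]; norm_num)).cast_ncard_eq, hL2 i]; rfl
  have hLcirc : ∀ i j, i ≠ j → M.IsCircuit (L i ∪ L j) :=
    fun i j hij ↦ circ_iff_isCircuit.1 (hcirc i j hij)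
  have h3 : ∀ S ⊆ M.E, S.encard ≤ 3 → M.Indep S := fun S ↦
    indep_of_encard_le_three (fun C ↦ IsCircuit.two_lt_encard hL hdisj hcup hLcirc) htri
  obtain ⟨k, l, hkl, hcompl⟩ := exists_iUnion_sdiff_eq_union_of_fin_four hdisj hij
  have hH4 : (L k ∪ L l).encard = 4 := by
    rw [encard_union_eq (hdisj k l hkl), hL, hL]; rfl
  have hcoc := (hLcirc k l hkl).compl_isCocircuit (finite_of_encard_eq_coe hH4)
    ((hLcirc k l hkl).closure_eq_self hH4 h3 hu35)
    (by rw [hrk.eRank_eq (by norm_num), hH4]; rfl)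
  rw [← hcompl, hcup, sdiff_sdiff_cancel_left ((hLcirc i j hij).subset_ground)] at hcoc
  exact cocirc_iff_isCocircuit.2 hcoc

/-- a rank-4 matroid on 8 elements with no triangles, no
`U_{3,5}`-restriction, and a partition into four pairs whose pairwise unions are circuits,
has those unions as cocircuits too (it is a rank-4 tipless spike). -/
theorem stmt10 {α : Type*} (M : Matroid α) (hcard : M.E.ncard = 8) (hrk : RankEq M 4)
    (htri : ∀ T, ¬ Triangle M T) (hu35 : ∀ X, ¬ U35Restriction M X)
    (L : Fin 4 → Set α) (hL2 : ∀ i, (L i).ncard = 2)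
    (hdisj : ∀ i j : Fin 4, i ≠ j → Disjoint (L i) (L j))
    (hcup : (⋃ i, L i) = M.E)
    (hcirc : ∀ i j : Fin 4, i ≠ j → Circ M (L i ∪ L j)) :
    ∀ i j : Fin 4, i ≠ j → Cocirc M (L i ∪ L j) :=
  stmt10_general M hrk htri hu35 L hL2 hdisj hcup hcirc

end SpikePaper
end

section
/- Let M be a matroid of rank 4 and corank 4 on 8 elements such that for every element e, the contraction M / e is a rank-3 tipped spike. Then for each x ∈ E(M) there exists an element y ≠ x such that {x, y} is contained in at least three distinct 4-element circuits of M. -/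
/-!
In a rank-3 tipped spike every pair of elements is independent: two elements on different legs
cannot be parallel, for then both legs would lie in the closure of `{t, b}`, of rank two, while
together they have rank three. So every single-element contraction of `M` is simple, and hence
`M` has no circuit with at most three elements. For `x ∈ E(M)` let `t` be the tip of `M ／ x`;
each triangle `{t, xᵢ, yᵢ}` of `M ／ x` lifts to a dependent set `{x, t, xᵢ, yᵢ}` of `M`, which
is therefore a 4-element circuit.
-/

open Matroid Set

namespace SpikePaper

variable {α : Type*}

lemma con_eq_contract (M : Matroid α) (C : Set α) : con M C = M ／ C := rfl

lemma RkEq.eRk_eq {M : Matroid α} {X : Set α} {n : ℕ} (h : RkEq M X n) (hn : n ≠ 0) :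
    M.eRk X = n := by
  obtain ⟨I, hI, rfl⟩ := h
  rw [hI.eRk_eq_encard, (finite_of_ncard_ne_zero hn).cast_ncard_eq]

lemma simple_of_forall_indep_pair {M : Matroid α}
    (h : ∀ a ∈ M.E, ∀ b ∈ M.E, M.Indep {a, b}) : Simple M := by
  intro X hX hX2
  obtain rfl | ⟨a, ha⟩ := X.eq_empty_or_nonempty
  · exact M.empty_indep
  have hX1 : (X \ {a}).encard ≤ 1 := by
    rw [encard_sdiff_singleton_of_mem ha, tsub_le_iff_right]
    exact hX2.trans_eq one_add_one_eq_two.symm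
  rw [← insert_eq_of_mem ha, ← insert_sdiff_singleton]
  obtain hXa | ⟨b, hXa⟩ := encard_le_one_iff_eq.1 hX1
  · simpa [hXa] using h a (hX ha) a (hX ha)
  · have hb : b ∈ X := (hXa.symm ▸ mem_singleton b : b ∈ X \ {a}).1
    simpa [hXa] using h a (hX ha) b (hX hb)

lemma ne_univ_of_ncard_lt {ι : Type*} [Finite ι] {J : Set ι} (hJ : J.ncard < Nat.card ι) :
    J ≠ univ := by
  rintro rfl
  simp [ncard_univ] at hJ

namespace IsTippedSpike

variable {N : Matroid α} {r : ℕ} {t a b : α} {x y : Fin r → α} {i j : Fin r}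

lemma isCircuit_triangle (h : IsTippedSpike N r t x y) (i : Fin r) :
    N.IsCircuit {t, x i, y i} :=
  circ_iff_isCircuit.1 (h.2.2.2.2.1 i)

lemma encard_triangle (h : IsTippedSpike N r t x y) (i : Fin r) :
    ({t, x i, y i} : Set α).encard = 3 := by
  obtain ⟨-, ⟨-, -, hxy, htx, hty⟩, -⟩ := h
  rw [encard_insert_of_notMem (by simp [htx i, hty i]), encard_pair (hxy i i)]
  rfl

lemma eRk_biUnion_legs (h : IsTippedSpike N r t x y) {J : Set (Fin r)} (hJ : J.Nonempty)
    (hJr : J.ncard < r) : N.eRk (⋃ i ∈ J, {x i, y i}) = (J.ncard + 1 : ℕ) :=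
  (h.2.2.2.2.2 J hJ (ne_univ_of_ncard_lt (by simpa using hJr))).eRk_eq (Nat.succ_ne_zero _)

lemma triangle_sdiff_eq (h : IsTippedSpike N r t x y) (ha : a ∈ ({x i, y i} : Set α)) :
    ∃ e, ({t, x i, y i} : Set α) \ {e} = {t, a} ∧ e ∈ ({t, x i, y i} : Set α) := by
  obtain ⟨-, ⟨-, -, hxy, htx, hty⟩, -⟩ := h
  have hxyi := hxy i i
  rcases ha with rfl | rfl | -
  · exact ⟨y i, by ext; grind, by simp⟩
  · exact ⟨x i, by ext; grind, by simp⟩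

lemma triangle_injective (h : IsTippedSpike N r t x y) :
    Function.Injective fun i ↦ ({t, x i, y i} : Set α) := by
  obtain ⟨-, ⟨hx, -, hxy, htx, -⟩, -⟩ := h
  intro i j hij
  have hxi : x i ∈ ({t, x j, y j} : Set α) := by
    rw [← show ({t, x i, y i} : Set α) = {t, x j, y j} from hij]
    simp
  obtain hxi | hxi | hxi := hxi
  · exact absurd hxi.symm (htx i)
  · exact hx hxi
  · exact absurd hxi (hxy i j)

lemma indep_tip_pair (h : IsTippedSpike N r t x y) (ha : a ∈ ({x i, y i} : Set α)) :
    N.Indep {t, a} := by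
  obtain ⟨e, hCe, he⟩ := h.triangle_sdiff_eq ha
  exact hCe ▸ (h.isCircuit_triangle i).sdiff_singleton_indep he

lemma leg_subset_closure (h : IsTippedSpike N r t x y) (ha : a ∈ ({x i, y i} : Set α)) :
    ({x i, y i} : Set α) ⊆ N.closure {t, a} := by
  obtain ⟨e, hCe, -⟩ := h.triangle_sdiff_eq ha
  exact hCe ▸
    (subset_insert _ _).trans ((h.isCircuit_triangle i).subset_closure_sdiff_singleton e)

lemma indep_leg (h : IsTippedSpike N r t x y) (i : Fin r) : N.Indep {x i, y i} := by
  have hrk := h.eRk_biUnion_legs (singleton_nonempty i)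
    (by rw [ncard_singleton]; have := h.1; omega)
  rw [biUnion_singleton, ncard_singleton] at hrk
  rw [indep_iff_eRk_eq_encard_of_finite (toFinite _), hrk, encard_pair (h.2.1.2.2.1 i i)]
  rfl

lemma indep_pair_of_ne (h : IsTippedSpike N r t x y) (hij : i ≠ j)
    (ha : a ∈ ({x i, y i} : Set α)) (hb : b ∈ ({x j, y j} : Set α)) : N.Indep {a, b} := by
  by_contra hdep
  have htb := h.indep_tip_pair hb
  have haE : a ∈ N.E := (h.indep_tip_pair ha).subset_ground (by simp)
  have hbE : b ∈ N.E := htb.subset_ground (by simp)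
  have ha_cl : a ∈ N.closure {t, b} :=
    N.closure_subset_closure (by simp) ((htb.subset (by simp)).mem_closure_iff.2
      (Or.inl ⟨hdep, insert_subset haE (singleton_subset_iff.2 hbE)⟩))
  have hlegs : ⋃ k ∈ ({i, j} : Set (Fin r)), ({x k, y k} : Set α) ⊆ N.closure {t, b} := by
    simp only [biUnion_insert, biUnion_singleton, union_subset_iff]
    refine ⟨(h.leg_subset_closure ha).trans (closure_subset_closure_of_subset_closure ?_),
      h.leg_subset_closure hb⟩
    exact insert_subset (N.mem_closure_of_mem (by simp) htb.subset_ground)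
      (singleton_subset_iff.2 ha_cl)
  have hrk := h.eRk_biUnion_legs (insert_nonempty i {j})
    (by rw [ncard_pair hij]; have := h.1; omega)
  rw [ncard_pair hij] at hrk
  have : N.eRk (⋃ k ∈ ({i, j} : Set (Fin r)), ({x k, y k} : Set α)) ≤ 2 :=
    calc _ ≤ N.eRk (N.closure {t, b}) := N.eRk_mono hlegs
      _ = N.eRk {t, b} := N.eRk_closure_eq _
      _ ≤ ({t, b} : Set α).encard := N.eRk_le_encard _
      _ ≤ 2 := (encard_insert_le _ _).trans_eq (by rw [encard_singleton]; rfl)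
  rw [hrk] at this
  norm_num at this

lemma indep_tip_insert (h : IsTippedSpike N r t x y) (hb : b ∈ N.E) : N.Indep {t, b} := by
  rw [h.2.2.1, mem_insert_iff, mem_iUnion] at hb
  obtain rfl | ⟨j, hbj⟩ := hb
  · have hx0 := h.indep_tip_pair (i := ⟨0, by have := h.1; omega⟩) (mem_insert _ _)
    rw [pair_eq_singleton]
    exact hx0.subset (singleton_subset_iff.2 (mem_insert _ _))
  · exact h.indep_tip_pair hbj

lemma indep_pair (h : IsTippedSpike N r t x y) (ha : a ∈ N.E) (hb : b ∈ N.E) :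
    N.Indep {a, b} := by
  have hb' := hb
  rw [h.2.2.1, mem_insert_iff, mem_iUnion] at ha hb'
  obtain rfl | ⟨i, hai⟩ := ha
  · exact h.indep_tip_insert hb
  obtain rfl | ⟨j, hbj⟩ := hb'
  · exact pair_comm a b ▸ h.indep_tip_insert ((h.indep_tip_pair hai).subset_ground (by simp))
  obtain rfl | hij := eq_or_ne i j
  · exact (h.indep_leg i).subset (insert_subset hai (singleton_subset_iff.2 hbj))
  · exact h.indep_pair_of_ne hij hai hbj

lemma simple (h : IsTippedSpike N r t x y) : Simple N :=
  simple_of_forall_indep_pair fun _ ha _ hb ↦ h.indep_pair ha hb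

end IsTippedSpike

section SimpleContractions

variable {M : Matroid α} {x : α} {C D : Set α}

lemma isNonloop_of_forall_simple_contract (hM : ∀ e ∈ M.E, Simple (M ／ {e}))
    (hE : M.E.Nontrivial) (hx : x ∈ M.E) : M.IsNonloop x := by
  obtain ⟨a, ha, hax⟩ := hE.exists_ne x
  have hxa : (M ／ {a}).Indep {x} :=
    hM a ha {x} (by simp [hx, hax.symm]) (by simp)
  exact indep_singleton.1 hxa.of_contract

lemma indep_of_forall_simple_contract (hM : ∀ e ∈ M.E, Simple (M ／ {e}))
    (hE : M.E.Nontrivial) (hD : D ⊆ M.E) (hD3 : D.encard ≤ 3) : M.Indep D := by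
  obtain rfl | ⟨a, ha⟩ := D.eq_empty_or_nonempty
  · exact M.empty_indep
  have hD2 : (D \ {a}).encard ≤ 2 := by
    rw [encard_sdiff_singleton_of_mem ha, tsub_le_iff_right]
    exact hD3.trans_eq (by norm_num)
  have hDa := hM a (hD ha) (D \ {a}) (sdiff_subset_sdiff_left hD) hD2
  rw [(isNonloop_of_forall_simple_contract hM hE (hD ha)).contractElem_indep_iff,
    insert_sdiff_singleton, insert_eq_of_mem ha] at hDa
  exact hDa.2

lemma isCircuit_insert_of_contract (hM : ∀ e ∈ M.E, Simple (M ／ {e})) (hE : M.E.Nontrivial)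
    (hx : x ∈ M.E) (hC : (M ／ {x}).IsCircuit C) (hC3 : C.encard = 3) :
    M.IsCircuit (insert x C) := by
  have hdep : M.Dep (insert x C) := by
    simpa using hC.dep.of_contract (singleton_subset_iff.2 hx)
  refine isCircuit_iff_forall_ssubset.2 ⟨hdep, fun I hI ↦ ?_⟩
  refine indep_of_forall_simple_contract hM hE (hI.subset.trans hdep.subset_ground) ?_
  have hIfin : I.Finite := ((finite_of_encard_eq_coe hC3).insert x).subset hI.subset
  have hlt : I.encard < 3 + 1 :=
    (hIfin.encard_lt_encard hI).trans_le (hC3 ▸ encard_insert_le C x)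
  exact Order.le_of_lt_add_one hlt

end SimpleContractions

lemma threeFourCircs_of_injective {M : Matroid α} {u v : α} (C : Fin 3 → Set α)
    (hC : ∀ i, M.IsCircuit (C i)) (hC4 : ∀ i, (C i).encard = 4) (hinj : Function.Injective C)
    (huv : ∀ i, {u, v} ⊆ C i) : ThreeFourCircs M u v :=
  ⟨C 0, C 1, C 2, circ_iff_isCircuit.2 (hC 0), circ_iff_isCircuit.2 (hC 1),
    circ_iff_isCircuit.2 (hC 2), hC4 0, hC4 1, hC4 2, hinj.ne (by decide), hinj.ne (by decide),
    hinj.ne (by decide), huv 0, huv 1, huv 2⟩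

theorem stmt13_general {α : Type*} (M : Matroid α)
    (hcon : ∀ e ∈ M.E, ∃ (t : α) (x y : Fin 3 → α),
      IsTippedSpike (con M {e}) 3 t x y) :
    ∀ x ∈ M.E, ∃ y ∈ M.E, y ≠ x ∧ ThreeFourCircs M x y := by
  simp only [con_eq_contract] at hcon
  have hM : ∀ e ∈ M.E, Simple (M ／ {e}) := fun e he ↦ by
    obtain ⟨t, xs, ys, hS⟩ := hcon e he
    exact hS.simple
  intro x hx
  obtain ⟨t, xs, ys, hS⟩ := hcon x hx
  have hT : ∀ i, ({t, xs i, ys i} : Set α) ⊆ M.E \ {x} :=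
    fun i ↦ (hS.isCircuit_triangle i).subset_ground
  have ht : t ∈ M.E \ {x} := hT 0 (mem_insert _ _)
  have hE : M.E.Nontrivial := ⟨t, ht.1, x, hx, ht.2⟩
  have hxT : ∀ i, x ∉ ({t, xs i, ys i} : Set α) := fun i hxi ↦ (hT i hxi).2 rfl
  refine ⟨t, ht.1, ht.2, threeFourCircs_of_injective (fun i ↦ insert x {t, xs i, ys i})
    (fun i ↦ isCircuit_insert_of_contract hM hE hx (hS.isCircuit_triangle i)
      (hS.encard_triangle i))
    (fun i ↦ by rw [encard_insert_of_notMem (hxT i), hS.encard_triangle]; rfl)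
    (fun i j hij ↦ hS.triangle_injective ?_)
    (fun i ↦ insert_subset_insert (singleton_subset_iff.2 (mem_insert _ _)))⟩
  simpa [insert_sdiff_self_of_notMem (hxT i), insert_sdiff_self_of_notMem (hxT j)]
    using congrArg (· \ {x}) hij

/-- if `M` has rank 4 and corank 4 on 8 elements and every single-element
contraction is a rank-3 tipped spike, then every `x` has a buddy `y` with `{x, y}` inside
three distinct 4-element circuits. -/
theorem stmt13 {α : Type*} (M : Matroid α) (hcard : M.E.ncard = 8)
    (hrk : RankEq M 4) (hrk' : RankEq M✶ 4)
    (hcon : ∀ e ∈ M.E, ∃ (t : α) (x y : Fin 3 → α),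
      IsTippedSpike (con M {e}) 3 t x y) :
    ∀ x ∈ M.E, ∃ y ∈ M.E, y ≠ x ∧ ThreeFourCircs M x y :=
  stmt13_general M hcon

end SpikePaper
end
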